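/- arXiv:1210.2184 — 5 statements merged into one kernel-verified Lean document; each statement's English description precedes it below -/
import Mathlib

section
/- Let p be a prime, G a finite group, S a Sylow p-subgroup of G, N a normal subgroup of G, S0 := S ∩ N, and let T be a subgroup of G with S0 ≤ T ≤ S. Let P be a subgroup of T and set P0 := P ∩ N. Assume there exists a subgroup U of N such that every element of U has order coprime to p, every element of U commutes with every element of P0, and every element of C_N(P0) can be written as z·u with z in the center Z(P0) of P0 and u ∈ U. Then A°(P) = O^p(Aut_{NT}(P)) = O^p(Aut_N(P)), where NT denotes the subgroup N ⊔ T of G. -/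
/-- The subgroup of `MulAut ↥P` consisting of automorphisms of `P` induced by
conjugation by elements of `H` normalizing `P`. -/
def autBy {G : Type*} [Group G] (H P : Subgroup G) : Subgroup (MulAut ↥P) :=
  Subgroup.closure
    {φ : MulAut ↥P | ∃ h ∈ H, h ∈ Subgroup.normalizer (P : Set G) ∧ ∀ x : ↥P, (φ x : G) = h⁻¹ * x * h}

/-- `O^p(K)`: the subgroup generated by the elements of `K` of order coprime to `p`. -/
def Op (p : ℕ) {M : Type*} [Group M] (K : Subgroup M) : Subgroup M :=
  Subgroup.closure {x : M | x ∈ K ∧ Nat.Coprime (orderOf x) p}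

/-- `A°(P)` relative to the normal subgroup `N`: the subgroup of `MulAut ↥P` generated by
the `p'`-automorphisms of `P` which are induced by conjugation by an element of `G`
normalizing `P`, satisfy `[P, φ] ≤ P ⊓ N`, and restrict on `P ⊓ N` to conjugation by an
element of `N` normalizing `P ⊓ N`. -/
def Acirc {G : Type*} [Group G] (p : ℕ) (N P : Subgroup G) : Subgroup (MulAut ↥P) :=
  Subgroup.closure
    {φ : MulAut ↥P | Nat.Coprime (orderOf φ) p ∧
      (∃ g ∈ Subgroup.normalizer (P : Set G), ∀ x : ↥P, (φ x : G) = g⁻¹ * x * g) ∧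
      (∀ x : ↥P, (x : G)⁻¹ * (φ x : G) ∈ P ⊓ N) ∧
      (∃ n ∈ N, n ∈ Subgroup.normalizer ((P ⊓ N : Subgroup G) : Set G) ∧
        ∀ x : ↥P, (x : G) ∈ N → (φ x : G) = n⁻¹ * x * n)}


/-!
Every element of `autBy H P` is a conjugation `c_h : x ↦ h⁻¹ x h`. For `h ∈ N ⊔ T` some `p`-power
`h ^ p ^ k` lies in `N`, so a `p'`-automorphism `c_h` is a power of `c_{h ^ p ^ k} ∈ autBy N P`;
and the `p'`-elements of `autBy N P` visibly satisfy the conditions defining `A°(P)`.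

Conversely, let `φ = c_g` generate `A°(P)`, with `φ` equal to `c_n` on `P₀ = P ⊓ N`. Then
`u = g n⁻¹` centralizes `P₀`. The hypothesis on `C_N(P₀)` says that its `p`-elements lie in `P`,
so `P` is a Sylow `p`-subgroup of `C_N(P₀) P`; this group contains `u⁻¹ P u`, and Sylow's theorem
corrects `u` by some `c ∈ C_N(P₀)` to an element `h = u c` normalizing `P`. Now
`φ = c_{h⁻¹ g} * c_h` with `h⁻¹ g ∈ N`, and `c_h` normalizes `autBy N P` and has `p`-power order,
being trivial on `P₀` and on `P / P₀`. As `φ` has `p'`-order, `φ ∈ autBy N P`.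
-/

open Subgroup Pointwise

section GroupTheory

variable {M : Type*} [Group M]

theorem Subgroup.mem_of_pow_mem_of_coprime {A : Subgroup M} {x : M} {n : ℕ}
    (hn : n.Coprime (orderOf x)) (h : x ^ n ∈ A) : x ∈ A := by
  obtain ⟨m, hm⟩ := exists_pow_eq_self_of_coprime hn
  exact hm ▸ pow_mem h m

theorem Subgroup.mul_pow_mul_inv_pow_mem {A : Subgroup M} {χ ψ : M} (hχ : χ ∈ A)
    (hψ : ψ ∈ normalizer (A : Set M)) (n : ℕ) : (χ * ψ) ^ n * (ψ ^ n)⁻¹ ∈ A := by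
  induction n with
  | zero => simp
  | succ n ih =>
    have hconj : ψ ^ n * χ * (ψ ^ n)⁻¹ ∈ A := (mem_normalizer_iff.mp (pow_mem hψ n) χ).mp hχ
    have e : (χ * ψ) ^ (n + 1) * (ψ ^ (n + 1))⁻¹
        = ((χ * ψ) ^ n * (ψ ^ n)⁻¹) * (ψ ^ n * χ * (ψ ^ n)⁻¹) := by
      rw [pow_succ, pow_succ]
      group
    rw [e]
    exact mul_mem ih hconj

theorem Subgroup.mul_mem_of_pow_eq_one {A : Subgroup M} {χ ψ : M} (hχ : χ ∈ A)
    (hψ : ψ ∈ normalizer (A : Set M)) {n : ℕ} (hψn : ψ ^ n = 1)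
    (hn : n.Coprime (orderOf (χ * ψ))) : χ * ψ ∈ A :=
  mem_of_pow_mem_of_coprime hn (by simpa [hψn] using mul_pow_mul_inv_pow_mem hχ hψ n)

theorem MulAut.pow_card_eq_one_of_map_inv_mul_self (ψ : MulAut M)
    (h : ∀ x, ψ (x⁻¹ * ψ x) = x⁻¹ * ψ x) : ψ ^ Nat.card M = 1 := by
  have hpow : ∀ (j : ℕ) (x : M), (ψ ^ j) x = x * (x⁻¹ * ψ x) ^ j := by
    intro j
    induction j with
    | zero => simp
    | succ j ih =>
      intro x
      rw [pow_succ', MulAut.mul_apply, ih, map_mul, map_pow, h, pow_succ', ← mul_assoc,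
        mul_inv_cancel_left]
  ext x
  simp [hpow, pow_card_eq_one']

theorem eq_one_of_commute_of_mul_pow_eq_one {p : ℕ} {z v : M} (hzv : Commute z v) {b : ℕ}
    (hz : z ^ p ^ b = 1) (hv : (orderOf v).Coprime p) {a : ℕ} (h : (z * v) ^ p ^ a = 1) :
    v = 1 := by
  have hva : v ^ p ^ a = (z ^ p ^ a)⁻¹ := eq_inv_of_mul_eq_one_right (by rw [← hzv.mul_pow, h])
  have hv1 : v ^ p ^ (a + b) = 1 := by
    rw [pow_add, pow_mul, hva, inv_pow, ← pow_mul, mul_comm, pow_mul, hz, one_pow, inv_one]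
  rw [← orderOf_eq_one_iff]
  exact (hv.pow_right (a + b)).eq_one_of_dvd (orderOf_dvd_of_pow_eq_one hv1)

theorem Subgroup.Normal.commutator_mem_of_inv_mul_mem {N : Subgroup M} (hN : N.Normal)
    {x g w : M} (hxg : x⁻¹ * g⁻¹ * x * g ∈ N) (hwg : w⁻¹ * g ∈ N) :
    x⁻¹ * w⁻¹ * x * w ∈ N := by
  have hw : (w : M ⧸ N) = g := QuotientGroup.eq.mpr hwg
  rw [← QuotientGroup.eq_one_iff] at hxg ⊢
  simpa [hw] using hxg

theorem Subgroup.normalizer_le_normalizer_centralizer (s : Set M) :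
    normalizer s ≤ normalizer (centralizer s : Set M) := by
  intro g hg w
  have hs : ∀ y, y ∈ s ↔ g⁻¹ * y * g ∈ s := mem_set_normalizer_iff''.mp hg
  simp only [SetLike.mem_coe, mem_centralizer_iff]
  refine ⟨fun hw y hy => ?_, fun hw y hy => ?_⟩
  · have := hw _ ((hs y).mp hy)
    calc y * (g * w * g⁻¹) = g * ((g⁻¹ * y * g) * w) * g⁻¹ := by group
      _ = g * w * g⁻¹ * y := by rw [this]; group
  · have := hw _ ((mem_set_normalizer_iff.mp hg y).mp hy)
    calc y * w = g⁻¹ * ((g * y * g⁻¹) * (g * w * g⁻¹)) * g := by group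
      _ = w * y := by rw [this]; group

theorem eq_of_isPGroup_of_le_sup {p : ℕ} {C P Q : Subgroup M} (hPC : P ≤ normalizer (C : Set M))
    (hC : ∀ c ∈ C, ∀ a : ℕ, c ^ p ^ a = 1 → c ∈ P) (hQ : IsPGroup p Q) (hPQ : P ≤ Q)
    (hQC : Q ≤ C ⊔ P) : Q = P := by
  refine le_antisymm (fun q hq => ?_) hPQ
  obtain ⟨c, hc, x, hx, rfl⟩ : q ∈ (C : Set M) * (P : Set M) := by
    rw [← coe_mul_of_right_le_normalizer_left C P hPC]
    exact hQC hq
  have hcQ : c ∈ Q := by simpa using mul_mem hq (inv_mem (hPQ hx))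
  obtain ⟨a, ha⟩ := hQ ⟨c, hcQ⟩
  exact mul_mem (hC c hc a (by simpa using congrArg Subtype.val ha)) hx

theorem exists_mem_mul_mem_normalizer [Finite M] {p : ℕ} [Fact p.Prime] {H P : Subgroup M}
    (hP : IsPGroup p P) (hPH : P ≤ H)
    (hmax : ∀ Q : Subgroup M, IsPGroup p Q → P ≤ Q → Q ≤ H → Q = P) {u : M}
    (hu : ∀ x ∈ P, u⁻¹ * x * u ∈ H) : ∃ γ ∈ H, u * γ ∈ normalizer (P : Set M) := by
  let S : Sylow p H :=
    { toSubgroup := P.subgroupOf H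
      isPGroup' := hP.of_equiv (subgroupOfEquivOfLe hPH).symm
      is_maximal' := fun {Q} hQ hPQ => by
        have hQP : Q.map H.subtype = P :=
          hmax _ (hQ.map _) (fun x hx => ⟨⟨x, hPH hx⟩, hPQ (mem_subgroupOf.mpr hx), rfl⟩)
            (map_subtype_le Q)
        rw [← hQP, subgroupOf, comap_map_eq_self_of_injective H.subtype_injective] }
  let R : Subgroup M := P.map (MulAut.conj u⁻¹).toMonoidHom
  have hRH : R ≤ H := by
    rintro _ ⟨x, hx, rfl⟩
    simpa [MulAut.conj_apply] using hu x hx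
  obtain ⟨Q, hRQ⟩ := ((hP.map _).of_equiv (subgroupOfEquivOfLe hRH).symm).exists_le_sylow
  obtain ⟨γ, hγ⟩ := MulAction.exists_smul_eq H Q S
  have hγu : (γ : M) * u⁻¹ ∈ normalizer (P : Set M) := by
    refine mem_normalizer_fintype fun x hx => ?_
    have hxQ : (⟨u⁻¹ * x * u, hu x hx⟩ : H) ∈ Q :=
      hRQ (mem_subgroupOf.mpr ⟨x, hx, by simp⟩)
    have := smul_mem_pointwise_smul _ (MulAut.conj γ) _ hxQ
    rw [← Sylow.coe_subgroup_smul, hγ] at this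
    simpa [MulAut.conj_apply, mul_assoc] using mem_subgroupOf.mp this
  exact ⟨(γ : M)⁻¹, inv_mem γ.2, by simpa using inv_mem hγu⟩

end GroupTheory

section Automorphisms

variable {G : Type*} [Group G]

theorem autBy_eq_map (H P : Subgroup G) :
    autBy H P = (H.subgroupOf (normalizer (P : Set G))).map P.normalizerMonoidHom := by
  refine le_antisymm (closure_le _ |>.mpr ?_) fun φ hφ => ?_
  · rintro φ ⟨h, hH, hh, hφ⟩
    refine ⟨⟨h⁻¹, inv_mem hh⟩, mem_subgroupOf.mpr (inv_mem hH), ?_⟩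
    ext x
    simp [hφ]
  · obtain ⟨g, hg, rfl⟩ := hφ
    exact subset_closure ⟨(g : G)⁻¹, inv_mem (mem_subgroupOf.mp hg), inv_mem g.2, fun x => by simp⟩

theorem normalizerMonoidHom_mem_autBy {H P : Subgroup G} {g : normalizer (P : Set G)}
    (hg : (g : G) ∈ H) : P.normalizerMonoidHom g ∈ autBy H P := by
  rw [autBy_eq_map]
  exact mem_map_of_mem _ (mem_subgroupOf.mpr hg)

theorem exists_normalizerMonoidHom_eq_of_mem_autBy {H P : Subgroup G} {φ : MulAut P}
    (hφ : φ ∈ autBy H P) :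
    ∃ g : normalizer (P : Set G), (g : G) ∈ H ∧ P.normalizerMonoidHom g = φ := by
  rw [autBy_eq_map] at hφ
  obtain ⟨g, hg, rfl⟩ := hφ
  exact ⟨g, mem_subgroupOf.mp hg, rfl⟩

theorem autBy_mono {H K : Subgroup G} (P : Subgroup G) (hHK : H ≤ K) : autBy H P ≤ autBy K P :=
  closure_mono fun _ ⟨h, hH, hh⟩ => ⟨h, hHK hH, hh⟩

theorem range_normalizerMonoidHom_le_normalizer_autBy (N P : Subgroup G) [N.Normal] :
    P.normalizerMonoidHom.range ≤ normalizer (autBy N P : Set (MulAut P)) := by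
  rw [MonoidHom.range_eq_map, autBy_eq_map, ← normalizer_eq_top (H := N.subgroupOf _)]
  exact le_normalizer_map _

theorem normalizerMonoidHom_pow_card_eq_one {N P : Subgroup G}
    {g : normalizer (P : Set G)} (hg : (g : G) ∈ centralizer ((P ⊓ N : Subgroup G) : Set G))
    (hPg : ∀ x ∈ P, x⁻¹ * g * x * (g : G)⁻¹ ∈ N) :
    P.normalizerMonoidHom g ^ Nat.card P = 1 := by
  refine MulAut.pow_card_eq_one_of_map_inv_mul_self _ fun x => Subtype.ext ?_
  have hx : ((x⁻¹ * P.normalizerMonoidHom g x : P) : G) ∈ P ⊓ N :=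
    ⟨Subtype.prop _, by simpa [mul_assoc] using hPg x x.2⟩
  rw [normalizerMonoidHom_apply_apply_coe, ← mem_centralizer_iff.mp hg _ hx, mul_inv_cancel_right]

theorem Op_mono {M : Type*} [Group M] (p : ℕ) {K L : Subgroup M} (hKL : K ≤ L) :
    Op p K ≤ Op p L :=
  closure_mono fun _ ⟨hK, hcop⟩ => ⟨hKL hK, hcop⟩

end Automorphisms

section Comparison

variable {G : Type*} [Group G] {p : ℕ}

theorem exists_pow_mem_of_mem_sup {N T : Subgroup G} [N.Normal] (hT : IsPGroup p T) {h : G}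
    (hh : h ∈ N ⊔ T) : ∃ k : ℕ, h ^ p ^ k ∈ N := by
  obtain ⟨n, hn, t, ht, rfl⟩ : h ∈ (N : Set G) * (T : Set G) := by rwa [← normal_mul]
  obtain ⟨k, hk⟩ := hT ⟨t, ht⟩
  have htk : t ^ p ^ k = 1 := by simpa using congrArg Subtype.val hk
  refine ⟨k, ?_⟩
  rw [← QuotientGroup.eq_one_iff, QuotientGroup.mk_pow, QuotientGroup.mk_mul,
    (QuotientGroup.eq_one_iff n).mpr hn, one_mul, ← QuotientGroup.mk_pow, htk, QuotientGroup.mk_one]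

theorem Op_autBy_sup_le {N T : Subgroup G} [N.Normal] (hT : IsPGroup p T) (P : Subgroup G) :
    Op p (autBy (N ⊔ T) P) ≤ Op p (autBy N P) := by
  refine closure_mono fun φ ⟨hφ, hcop⟩ => ⟨?_, hcop⟩
  obtain ⟨g, hg, rfl⟩ := exists_normalizerMonoidHom_eq_of_mem_autBy hφ
  obtain ⟨k, hk⟩ := exists_pow_mem_of_mem_sup hT hg
  refine mem_of_pow_mem_of_coprime (hcop.symm.pow_left k) ?_
  rw [← map_pow]
  exact normalizerMonoidHom_mem_autBy (by simpa using hk)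

theorem Op_autBy_le_Acirc (N P : Subgroup G) [N.Normal] : Op p (autBy N P) ≤ Acirc p N P := by
  refine closure_le _ |>.mpr fun φ ⟨hφ, hcop⟩ => subset_closure ?_
  obtain ⟨g, hgN, rfl⟩ := exists_normalizerMonoidHom_eq_of_mem_autBy hφ
  have hφg : ∀ x : P, (P.normalizerMonoidHom g x : G) = (g : G)⁻¹⁻¹ * x * (g : G)⁻¹ := by simp
  have hgP : (g : G)⁻¹ ∈ normalizer (P : Set G) := (normalizer _).inv_mem g.2
  have hgP0 : (g : G)⁻¹ ∈ normalizer ((P ⊓ N : Subgroup G) : Set G) :=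
    inf_normalizer_le_normalizer_inf ⟨hgP, by rw [normalizer_eq_top]; exact mem_top _⟩
  refine ⟨hcop, ⟨_, hgP, hφg⟩, fun x => ⟨?_, ?_⟩, ⟨_, inv_mem hgN, hgP0, fun x _ => hφg x⟩⟩
  · exact mul_mem (P.inv_mem x.2) (P.normalizerMonoidHom g x).2
  · simpa [mul_assoc] using mul_mem (‹N.Normal›.conj_mem _ hgN (x : G)⁻¹) (inv_mem hgN)

end Comparison

theorem mem_of_mem_centralizer_of_pow_eq_one {G : Type*} [Group G] {p : ℕ} {N P U : Subgroup G}
    (hP : IsPGroup p P) (hUp' : ∀ u ∈ U, Nat.Coprime (orderOf u) p)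
    (hUcomm : ∀ u ∈ U, ∀ x ∈ P ⊓ N, Commute u x)
    (hcent : ∀ c ∈ N ⊓ Subgroup.centralizer ↑(P ⊓ N),
      ∃ z ∈ (P ⊓ N) ⊓ Subgroup.centralizer ↑(P ⊓ N), ∃ u ∈ U, c = z * u) :
    ∀ c ∈ N ⊓ centralizer ((P ⊓ N : Subgroup G) : Set G), ∀ a : ℕ, c ^ p ^ a = 1 → c ∈ P := by
  intro c hc a hca
  obtain ⟨z, ⟨hz, -⟩, v, hv, rfl⟩ := hcent c hc
  obtain ⟨b, hb⟩ := hP ⟨z, hz.1⟩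
  have hv1 : v = 1 := eq_one_of_commute_of_mul_pow_eq_one (hUcomm v hv z hz).symm
    (by simpa using congrArg Subtype.val hb) (hUp' v hv) hca
  simpa [hv1] using hz.1

section Acirc

variable {G : Type*} [Group G] [Finite G] {p : ℕ} [Fact p.Prime]

theorem exists_mul_mem_normalizer_of_mem_centralizer {N P : Subgroup G} [N.Normal]
    (hP : IsPGroup p P)
    (hC : ∀ c ∈ N ⊓ centralizer ((P ⊓ N : Subgroup G) : Set G), ∀ a : ℕ, c ^ p ^ a = 1 → c ∈ P)
    {u : G} (hu : u ∈ centralizer ((P ⊓ N : Subgroup G) : Set G))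
    (huP : ∀ x ∈ P, x⁻¹ * u⁻¹ * x * u ∈ N) :
    ∃ c ∈ N ⊓ centralizer ((P ⊓ N : Subgroup G) : Set G), u * c ∈ normalizer (P : Set G) := by
  set C := N ⊓ centralizer ((P ⊓ N : Subgroup G) : Set G)
  have hPP0 : P ≤ normalizer ((P ⊓ N : Subgroup G) : Set G) :=
    (le_inf le_normalizer le_normalizer_of_normal).trans inf_normalizer_le_normalizer_inf
  have hPcent := hPP0.trans (normalizer_le_normalizer_centralizer _)
  have hPC : P ≤ normalizer (C : Set G) :=
    (le_inf le_normalizer_of_normal hPcent).trans inf_normalizer_le_normalizer_inf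
  have hconj : ∀ x ∈ P, u⁻¹ * x * u ∈ C ⊔ P := fun x hx => by
    have hxu : x⁻¹ * u⁻¹ * x ∈ centralizer ((P ⊓ N : Subgroup G) : Set G) := by
      simpa using (mem_normalizer_iff.mp (hPcent (inv_mem hx)) u⁻¹).mp (inv_mem hu)
    have hxuC : x⁻¹ * u⁻¹ * x * u ∈ C := ⟨huP x hx, mul_mem hxu hu⟩
    simpa [mul_assoc] using mul_mem (mem_sup_right hx) (mem_sup_left hxuC)
  obtain ⟨γ, hγ, hγP⟩ := exists_mem_mul_mem_normalizer hP le_sup_right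
    (fun Q hQ hPQ hQC => eq_of_isPGroup_of_le_sup hPC hC hQ hPQ hQC) hconj
  obtain ⟨c, hc, x, hx, rfl⟩ : γ ∈ (C : Set G) * (P : Set G) := by
    rwa [← coe_mul_of_right_le_normalizer_left C P hPC]
  exact ⟨c, hc, by simpa [mul_assoc] using mul_mem hγP (inv_mem (le_normalizer hx))⟩

theorem mem_autBy_of_restrict_eq_conj {N P : Subgroup G} [N.Normal] (hP : IsPGroup p P)
    (hC : ∀ c ∈ N ⊓ centralizer ((P ⊓ N : Subgroup G) : Set G), ∀ a : ℕ, c ^ p ^ a = 1 → c ∈ P)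
    {φ : MulAut P} (hcop : (orderOf φ).Coprime p) {g : G} (hg : g ∈ normalizer (P : Set G))
    (hφg : ∀ x : P, (φ x : G) = g⁻¹ * x * g) (hφP0 : ∀ x : P, (x : G)⁻¹ * φ x ∈ P ⊓ N)
    {n : G} (hn : n ∈ N) (hφn : ∀ x : P, (x : G) ∈ N → (φ x : G) = n⁻¹ * x * n) :
    φ ∈ autBy N P := by
  have hgP : ∀ x ∈ P, x⁻¹ * g⁻¹ * x * g ∈ N := fun x hx => by
    simpa [hφg, mul_assoc] using (hφP0 ⟨x, hx⟩).2
  have hu : g * n⁻¹ ∈ centralizer ((P ⊓ N : Subgroup G) : Set G) := by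
    rw [mem_centralizer_iff]
    rintro y ⟨hyP, hyN⟩
    have hy : g⁻¹ * y * g = n⁻¹ * y * n := (hφg ⟨y, hyP⟩).symm.trans (hφn ⟨y, hyP⟩ hyN)
    calc y * (g * n⁻¹) = g * (g⁻¹ * y * g) * n⁻¹ := by group
      _ = g * n⁻¹ * y := by rw [hy]; group
  have hun : (g * n⁻¹)⁻¹ * g ∈ N := by simpa using hn
  obtain ⟨c, hc, hh⟩ := exists_mul_mem_normalizer_of_mem_centralizer hP hC hu
    fun x hx => ‹N.Normal›.commutator_mem_of_inv_mul_mem (hgP x hx) hun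
  set h := g * n⁻¹ * c
  have hhg : h⁻¹ * g ∈ N := by simpa [h, mul_assoc] using mul_mem (inv_mem (mem_inf.mp hc).1) hn
  have hhgP : h⁻¹ * g ∈ normalizer (P : Set G) := mul_mem (inv_mem hh) hg
  have hφ : φ = P.normalizerMonoidHom ⟨(h⁻¹ * g)⁻¹, inv_mem hhgP⟩ *
      P.normalizerMonoidHom ⟨h⁻¹, inv_mem hh⟩ := by
    ext x
    simp only [MulAut.mul_apply, normalizerMonoidHom_apply_apply_coe, hφg]
    group
  have hψ_pow := normalizerMonoidHom_pow_card_eq_one (g := ⟨h⁻¹, inv_mem hh⟩)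
    (inv_mem (mul_mem hu (mem_inf.mp hc).2)) fun x hx => by
      simpa using ‹N.Normal›.commutator_mem_of_inv_mul_mem (hgP x hx) hhg
  obtain ⟨k, hk⟩ := IsPGroup.iff_card.mp hP
  rw [hφ]
  refine mul_mem_of_pow_eq_one (normalizerMonoidHom_mem_autBy (inv_mem hhg))
    (range_normalizerMonoidHom_le_normalizer_autBy N P ⟨_, rfl⟩) hψ_pow ?_
  rw [← hφ, hk]
  exact hcop.symm.pow_left k

theorem Acirc_le_Op_autBy {N P : Subgroup G} [N.Normal] (hP : IsPGroup p P)
    (hC : ∀ c ∈ N ⊓ centralizer ((P ⊓ N : Subgroup G) : Set G), ∀ a : ℕ, c ^ p ^ a = 1 → c ∈ P) :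
    Acirc p N P ≤ Op p (autBy N P) :=
  closure_le _ |>.mpr fun _ ⟨hcop, ⟨_, hg, hφg⟩, hφP0, ⟨_, hn, _, hφn⟩⟩ =>
    subset_closure ⟨mem_autBy_of_restrict_eq_conj hP hC hcop hg hφg hφP0 hn hφn, hcop⟩

end Acirc

theorem stmt0_general (p : ℕ) (hp : p.Prime) {G : Type*} [Group G] [Finite G]
    (S : Sylow p G) (N : Subgroup G) [N.Normal]
    (T : Subgroup G) (hTS : T ≤ S)
    (P : Subgroup G) (hPT : P ≤ T)
    (U : Subgroup G)
    (hUp' : ∀ u ∈ U, Nat.Coprime (orderOf u) p)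
    (hUcomm : ∀ u ∈ U, ∀ x ∈ P ⊓ N, Commute u x)
    (hcent : ∀ c ∈ N ⊓ Subgroup.centralizer ↑(P ⊓ N),
      ∃ z ∈ (P ⊓ N) ⊓ Subgroup.centralizer ↑(P ⊓ N), ∃ u ∈ U, c = z * u) :
    Acirc p N P = Op p (autBy (N ⊔ T) P) ∧
      Op p (autBy (N ⊔ T) P) = Op p (autBy N P) := by
  have : Fact p.Prime := ⟨hp⟩
  have hT : IsPGroup p T := S.isPGroup'.to_le hTS
  have hP : IsPGroup p P := hT.to_le hPT
  have hAcirc : Acirc p N P ≤ Op p (autBy N P) :=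
    Acirc_le_Op_autBy hP (mem_of_mem_centralizer_of_pow_eq_one hP hUp' hUcomm hcent)
  have hsup : Op p (autBy (N ⊔ T) P) ≤ Op p (autBy N P) := Op_autBy_sup_le hT P
  have hmono : Op p (autBy N P) ≤ Op p (autBy (N ⊔ T) P) := Op_mono p (autBy_mono P le_sup_left)
  exact ⟨le_antisymm (hAcirc.trans hmono) (hsup.trans (Op_autBy_le_Acirc N P)),
    le_antisymm hsup hmono⟩

theorem stmt0 (p : ℕ) (hp : p.Prime) {G : Type*} [Group G] [Finite G]
    (S : Sylow p G) (N : Subgroup G) [N.Normal]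
    (T : Subgroup G) (hS0T : (S : Subgroup G) ⊓ N ≤ T) (hTS : T ≤ S)
    (P : Subgroup G) (hPT : P ≤ T)
    (U : Subgroup G) (hUN : U ≤ N)
    (hUp' : ∀ u ∈ U, Nat.Coprime (orderOf u) p)
    (hUcomm : ∀ u ∈ U, ∀ x ∈ P ⊓ N, Commute u x)
    (hcent : ∀ c ∈ N ⊓ Subgroup.centralizer ↑(P ⊓ N),
      ∃ z ∈ (P ⊓ N) ⊓ Subgroup.centralizer ↑(P ⊓ N), ∃ u ∈ U, c = z * u) :
    Acirc p N P = Op p (autBy (N ⊔ T) P) ∧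
      Op p (autBy (N ⊔ T) P) = Op p (autBy N P) :=
  stmt0_general p hp S N T hTS P hPT U hUp' hUcomm hcent
end

section
/- Let p be a prime and G a finite group with a normal subgroup N. Let P be a p-subgroup of G and set P0 := P ∩ N. Assume there exists a subgroup U of N such that every element of U has order coprime to p, every element of U commutes with every element of P0, and every element of C_N(P0) can be written as z·u with z in the center Z(P0) of P0 and u ∈ U. Let g be an element of G normalizing P, of order coprime to p, such that x⁻¹·g⁻¹xg ∈ P0 for all x ∈ P, and suppose there exists n ∈ N of order coprime to p normalizing P0 with g⁻¹xg = n⁻¹xn for all x ∈ P0. Then g ∈ C_G(P)·P·N; that is, there exist c ∈ C_G(P), y ∈ P and m ∈ N with g = c·y·m. -/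
/-!
Put `P₀ = P ⊓ N` and `h = n * g⁻¹`. The hypothesis on `n` says that `h` centralizes `P₀`, and
the hypothesis on `g` then puts `x⁻¹ (h x h⁻¹)` into `C_N(P₀)` for `x ∈ P`, so `h` conjugates `P`
into `M = P · C_N(P₀)`. As `C_N(P₀) = Z(P₀) U` with `U` consisting of `p'`-elements, `M = P U`
and `P` is a Sylow subgroup of `M`; Sylow's theorem gives `u ∈ U` such that `w = u * h`
normalizes `P`. This `w` centralizes `P₀` and acts trivially on `P / P₀`, so `w ^ |P₀|`
centralizes `P`. Finally `w * g ∈ N` and `w` normalizes `K = C_G(P) P N`, whence `g ^ |P₀| ∈ K`;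
since `|P₀|` is a power of `p`, hence coprime to the order of `g`, also `g ∈ K`.
-/

open Subgroup
open scoped Pointwise

section

variable {G : Type*} [Group G]

namespace Subgroup

theorem conj_mem_centralizer_of_mem_normalizer {s : Set G} {a b : G} (ha : a ∈ normalizer s)
    (hb : b ∈ centralizer s) : a * b * a⁻¹ ∈ centralizer s :=
  (normal_subgroupOf_iff (centralizer_le_normalizer s)).mp inferInstance b a hb ha

theorem normalizer_le_normalizer_centralizer_s1 (s : Set G) :
    normalizer s ≤ normalizer (centralizer s : Set G) := fun a ha b =>
  ⟨conj_mem_centralizer_of_mem_normalizer ha, fun hb => by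
    simpa [mul_assoc] using conj_mem_centralizer_of_mem_normalizer (inv_mem ha) hb⟩

theorem inv_mul_conj_mem_centralizer {s : Set G} {x h : G} (hx : x ∈ normalizer s)
    (hh : h ∈ centralizer s) : x⁻¹ * (h * x * h⁻¹) ∈ centralizer s := by
  have := mul_mem (conj_mem_centralizer_of_mem_normalizer (inv_mem hx) hh) (inv_mem hh)
  simpa only [inv_inv, mul_assoc] using this

end Subgroup

theorem mul_inv_mem_centralizer_of_forall_conj_eq {s : Set G} {g n : G}
    (h : ∀ x ∈ s, g⁻¹ * x * g = n⁻¹ * x * n) : n * g⁻¹ ∈ centralizer s :=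
  mem_centralizer_iff.mpr fun x hx => by
    calc x * (n * g⁻¹) = n * (n⁻¹ * x * n) * g⁻¹ := by group
      _ = n * g⁻¹ * x := by rw [← h x hx]; group

theorem Subgroup.Normal.inv_mul_conj_mul_inv_mem {N : Subgroup G} (hN : N.Normal) {k g x : G}
    (hk : k ∈ N) (hx : x⁻¹ * (g⁻¹ * x * g) ∈ N) : x⁻¹ * (k * g⁻¹ * x * (k * g⁻¹)⁻¹) ∈ N := by
  have hk' : x⁻¹ * k * x ∈ N := by simpa using hN.conj_mem k hk x⁻¹
  have := mul_mem (mul_mem hk' hx) (inv_mem hk)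
  convert this using 1
  group

theorem pow_natCard_mem_centralizer {P Q : Subgroup G} {w : G}
    (hwQ : w ∈ centralizer (Q : Set G)) (hw : ∀ x ∈ P, x⁻¹ * (w * x * w⁻¹) ∈ Q) :
    w ^ Nat.card Q ∈ centralizer (P : Set G) := by
  refine mem_centralizer_iff.mpr fun x hx => ?_
  set a := x⁻¹ * (w * x * w⁻¹)
  have ha : a ∈ Q := hw x hx
  have hpow : ∀ j : ℕ, w ^ j * x * (w ^ j)⁻¹ = x * a ^ j := by
    intro j
    induction j with
    | zero => simp
    | succ j ih =>
      have hcomm : w * a ^ j * w⁻¹ = a ^ j := by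
        rw [← mem_centralizer_iff.mp hwQ _ (pow_mem ha j)]; group
      calc w ^ (j + 1) * x * (w ^ (j + 1))⁻¹ = w * (w ^ j * x * (w ^ j)⁻¹) * w⁻¹ := by
            rw [pow_succ']; group
        _ = x * a * (w * a ^ j * w⁻¹) := by rw [ih]; simp only [a]; group
        _ = x * a ^ (j + 1) := by rw [hcomm, pow_succ', mul_assoc]
  have haQ : a ^ Nat.card Q = 1 := orderOf_dvd_iff_pow_eq_one.mp (Q.orderOf_dvd_natCard ha)
  calc x * w ^ Nat.card Q = (w ^ Nat.card Q * x * (w ^ Nat.card Q)⁻¹) * w ^ Nat.card Q := by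
        rw [hpow, haQ, mul_one]
    _ = w ^ Nat.card Q * x := by group

theorem Subgroup.mem_of_mul_mem_of_pow_mem {K : Subgroup G} {a b : G} {q : ℕ}
    (hb : b ∈ normalizer (K : Set G)) (hab : b * a ∈ K) (hbq : b ^ q ∈ K)
    (hq : q.Coprime (orderOf a)) : a ∈ K := by
  have hpow : ∀ j : ℕ, b ^ j * a ^ j ∈ K := by
    intro j
    induction j with
    | zero => simp
    | succ j ih =>
      have := mul_mem ((mem_normalizer_iff.mp (pow_mem hb j) _).mp hab) ih
      rw [pow_succ, pow_succ']
      convert this using 1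
      group
  have haq : a ^ q ∈ K := by simpa using mul_mem (inv_mem hbq) (hpow q)
  obtain ⟨m, hm⟩ := exists_pow_eq_self_of_coprime hq
  exact hm ▸ pow_mem haq m

theorem IsPGroup.exists_sylow_eq_subgroupOf {p : ℕ} {P M : Subgroup G} (hP : IsPGroup p P)
    (hPM : P ≤ M)
    (hM : ∀ x ∈ M, ∃ y ∈ P, ∃ u : G, (orderOf u).Coprime p ∧ x = y * u) :
    ∃ S : Sylow p M, (S : Subgroup M) = P.subgroupOf M := by
  obtain ⟨S, hPS⟩ := hP.comap_subtype (K := M) |>.exists_le_sylow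
  refine ⟨S, le_antisymm (fun s hsS => ?_) hPS⟩
  obtain ⟨y, hy, u, hu, hs⟩ := hM s s.2
  have huS : (⟨y, hPM hy⟩ : M)⁻¹ * s ∈ S := mul_mem (inv_mem (hPS hy)) hsS
  obtain ⟨k, hk⟩ := S.isPGroup' ⟨_, huS⟩
  have hu1 : u = 1 := by
    refine orderOf_eq_one_iff.mp (hu.pow_right k |>.eq_one_of_dvd (orderOf_dvd_of_pow_eq_one ?_))
    have := congrArg (fun t : S => ((t : M) : G)) hk
    simpa [hs] using this
  simpa [mem_subgroupOf, hs, hu1] using hy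

section Sylow

variable [Finite G] {p : ℕ} [Fact p.Prime]

theorem IsPGroup.exists_conj_mem_sylow {Q : Subgroup G} (hQ : IsPGroup p Q) (S : Sylow p G) :
    ∃ m : G, ∀ x ∈ Q, m * x * m⁻¹ ∈ S := by
  obtain ⟨T, hQT⟩ := hQ.exists_le_sylow
  obtain ⟨m, rfl⟩ := MulAction.exists_smul_eq G T S
  refine ⟨m, fun x hx => ?_⟩
  change m * x * m⁻¹ ∈ MulAut.conj m • (T : Subgroup G)
  simpa [MulAut.smul_def] using
    smul_mem_pointwise_smul x (MulAut.conj m) (T : Subgroup G) (hQT hx)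

theorem Sylow.exists_mem_mul_mem_normalizer {P M : Subgroup G} (S : Sylow p M)
    (hS : (S : Subgroup M) = P.subgroupOf M) (hP : IsPGroup p P) {g : G}
    (hg : ∀ x ∈ P, g * x * g⁻¹ ∈ M) : ∃ m ∈ M, m * g ∈ normalizer (P : Set G) := by
  have hQ : IsPGroup p ((P.map (MulAut.conj g).toMonoidHom).subgroupOf M) :=
    (hP.map _).comap_subtype
  obtain ⟨m, hm⟩ := hQ.exists_conj_mem_sylow S
  refine ⟨m, m.2, mem_normalizer_fintype fun x hx => ?_⟩
  have := hm ⟨g * x * g⁻¹, hg x hx⟩ (mem_subgroupOf.mpr ⟨x, hx, rfl⟩)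
  change _ ∈ (S : Subgroup M) at this
  rw [hS, mem_subgroupOf] at this
  simpa [mul_assoc] using this

end Sylow

theorem Subgroup.normalizer_le_normalizer_centralizer_sup_sup (P N : Subgroup G) [N.Normal] :
    normalizer (P : Set G) ≤ normalizer ((centralizer (P : Set G) ⊔ P ⊔ N : Subgroup G) : Set G) :=
  (normalizer_le_normalizer_sup_of_normalizer_le_right
    (normalizer_le_normalizer_centralizer_s1 _)).trans normalizer_le_normalizer_sup_normal

theorem Subgroup.exists_eq_mul_mul_of_mem_centralizer_sup_sup {P N : Subgroup G} [N.Normal]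
    {g : G}    (hg : g ∈ centralizer (P : Set G) ⊔ P ⊔ N) :
    ∃ c ∈ centralizer (P : Set G), ∃ y ∈ P, ∃ m ∈ N, g = c * y * m := by
  rw [← SetLike.mem_coe, mul_normal,
    coe_mul_of_left_le_normalizer_right _ _ (centralizer_le_normalizer _)] at hg
  obtain ⟨_, ⟨c, hc, y, hy, rfl⟩, m, hm, rfl⟩ := hg
  exact ⟨c, hc, y, hy, m, hm, rfl⟩

section CentralizerOfIntersection

variable {N P U : Subgroup G} [N.Normal]

theorem Subgroup.le_normalizer_inf_normal : P ≤ normalizer ((P ⊓ N : Subgroup G) : Set G) :=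
  (le_inf le_normalizer le_normalizer_of_normal).trans inf_normalizer_le_normalizer_inf

theorem Subgroup.le_normalizer_inf_centralizer_inf :
    P ≤ normalizer ((N ⊓ centralizer ((P ⊓ N : Subgroup G) : Set G) : Subgroup G) : Set G) :=
  (le_inf le_normalizer_of_normal
    (le_normalizer_inf_normal.trans (normalizer_le_normalizer_centralizer_s1 _))).trans
    inf_normalizer_le_normalizer_inf

theorem exists_eq_mul_of_mem_sup_inf_centralizer
    (hcent : ∀ c ∈ N ⊓ centralizer ↑(P ⊓ N),
      ∃ z ∈ (P ⊓ N) ⊓ centralizer ↑(P ⊓ N), ∃ u ∈ U, c = z * u)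
    {x : G} (hx : x ∈ P ⊔ (N ⊓ centralizer ↑(P ⊓ N))) : ∃ y ∈ P, ∃ u ∈ U, x = y * u := by
  rw [← SetLike.mem_coe, coe_mul_of_left_le_normalizer_right _ _
    le_normalizer_inf_centralizer_inf] at hx
  obtain ⟨y, hy, c, hc, rfl⟩ := hx
  obtain ⟨z, hz, u, hu, rfl⟩ := hcent c hc
  exact ⟨y * z, mul_mem hy hz.1.1, u, hu, (mul_assoc _ _ _).symm⟩

theorem exists_mul_mem_normalizer_of_conj_mem_sup_inf_centralizer [Finite G] {p : ℕ}
    [Fact p.Prime] (hPp : IsPGroup p P) (hUp' : ∀ u ∈ U, Nat.Coprime (orderOf u) p)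
    (hcent : ∀ c ∈ N ⊓ centralizer ↑(P ⊓ N),
      ∃ z ∈ (P ⊓ N) ⊓ centralizer ↑(P ⊓ N), ∃ u ∈ U, c = z * u)
    {h : G} (hh : ∀ x ∈ P, h * x * h⁻¹ ∈ P ⊔ (N ⊓ centralizer ↑(P ⊓ N))) :
    ∃ u ∈ U, u * h ∈ normalizer (P : Set G) := by
  obtain ⟨S, hS⟩ := hPp.exists_sylow_eq_subgroupOf le_sup_left fun x hx => by
    obtain ⟨y, hy, u, hu, rfl⟩ := exists_eq_mul_of_mem_sup_inf_centralizer hcent hx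
    exact ⟨y, hy, u, hUp' u hu, rfl⟩
  obtain ⟨m, hm, hmh⟩ := S.exists_mem_mul_mem_normalizer hS hPp hh
  obtain ⟨y, hy, u, hu, rfl⟩ := exists_eq_mul_of_mem_sup_inf_centralizer hcent hm
  exact ⟨u, hu, by simpa [mul_assoc] using mul_mem (inv_mem (le_normalizer hy)) hmh⟩

end CentralizerOfIntersection

end

theorem stmt1_general (p : ℕ) (hp : p.Prime) {G : Type*} [Group G] [Finite G]
    (N : Subgroup G) [N.Normal] (P : Subgroup G) (hPp : IsPGroup p P)
    (U : Subgroup G) (hUN : U ≤ N)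
    (hUp' : ∀ u ∈ U, Nat.Coprime (orderOf u) p)
    (hUcomm : ∀ u ∈ U, ∀ x ∈ P ⊓ N, Commute u x)
    (hcent : ∀ c ∈ N ⊓ Subgroup.centralizer ↑(P ⊓ N),
      ∃ z ∈ (P ⊓ N) ⊓ Subgroup.centralizer ↑(P ⊓ N), ∃ u ∈ U, c = z * u)
    (g : G) (hg : Nat.Coprime (orderOf g) p)
    (hgcomm : ∀ x ∈ P, x⁻¹ * (g⁻¹ * x * g) ∈ P ⊓ N)
    (n : G) (hnN : n ∈ N)
    (hgn : ∀ x ∈ P ⊓ N, g⁻¹ * x * g = n⁻¹ * x * n) :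
    ∃ c ∈ Subgroup.centralizer (P : Set G), ∃ y ∈ P, ∃ m ∈ N, g = c * y * m := by
  have : Fact p.Prime := ⟨hp⟩
  have hh : n * g⁻¹ ∈ centralizer ((P ⊓ N : Subgroup G) : Set G) :=
    mul_inv_mem_centralizer_of_forall_conj_eq hgn
  obtain ⟨u, hu, hw⟩ := exists_mul_mem_normalizer_of_conj_mem_sup_inf_centralizer hPp hUp' hcent
    (h := n * g⁻¹) fun x hx => by
      simpa using mul_mem (mem_sup_left hx) (mem_sup_right (mem_inf.mpr
        ⟨Normal.inv_mul_conj_mul_inv_mem ‹_› hnN (hgcomm x hx).2,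
          inv_mul_conj_mem_centralizer (le_normalizer_inf_normal hx) hh⟩))
  set w := u * (n * g⁻¹) with hw_def
  have hwP0 : w ∈ centralizer ((P ⊓ N : Subgroup G) : Set G) :=
    mul_mem (mem_centralizer_iff.mpr fun z hz => (hUcomm u hu z hz).eq.symm) hh
  have hwP : ∀ x ∈ P, x⁻¹ * (w * x * w⁻¹) ∈ P ⊓ N := fun x hx =>
    mem_inf.mpr ⟨mul_mem (inv_mem hx) ((mem_normalizer_iff.mp hw x).mp hx), by
      simpa only [hw_def, mul_assoc] using
        Normal.inv_mul_conj_mul_inv_mem ‹_› (mul_mem (hUN hu) hnN) (hgcomm x hx).2⟩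
  obtain ⟨E, hE⟩ := IsPGroup.iff_card.mp (hPp.to_le (inf_le_left : P ⊓ N ≤ P))
  refine exists_eq_mul_mul_of_mem_centralizer_sup_sup (mem_of_mul_mem_of_pow_mem
    (normalizer_le_normalizer_centralizer_sup_sup P N hw) (mem_sup_right ?_)
    (mem_sup_left (mem_sup_left (pow_natCard_mem_centralizer hwP0 hwP)))
    (hE ▸ (hg.pow_right E).symm))
  simpa [hw_def, mul_assoc] using mul_mem (hUN hu) hnN

theorem stmt1 (p : ℕ) (hp : p.Prime) {G : Type*} [Group G] [Finite G]
    (N : Subgroup G) [N.Normal] (P : Subgroup G) (hPp : IsPGroup p P)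
    (U : Subgroup G) (hUN : U ≤ N)
    (hUp' : ∀ u ∈ U, Nat.Coprime (orderOf u) p)
    (hUcomm : ∀ u ∈ U, ∀ x ∈ P ⊓ N, Commute u x)
    (hcent : ∀ c ∈ N ⊓ Subgroup.centralizer ↑(P ⊓ N),
      ∃ z ∈ (P ⊓ N) ⊓ Subgroup.centralizer ↑(P ⊓ N), ∃ u ∈ U, c = z * u)
    (g : G) (hgP : g ∈ Subgroup.normalizer (P : Set G)) (hg : Nat.Coprime (orderOf g) p)
    (hgcomm : ∀ x ∈ P, x⁻¹ * (g⁻¹ * x * g) ∈ P ⊓ N)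
    (n : G) (hnN : n ∈ N) (hn : Nat.Coprime (orderOf n) p)
    (hnP0 : n ∈ Subgroup.normalizer ((P ⊓ N : Subgroup G) : Set G))
    (hgn : ∀ x ∈ P ⊓ N, g⁻¹ * x * g = n⁻¹ * x * n) :
    ∃ c ∈ Subgroup.centralizer (P : Set G), ∃ y ∈ P, ∃ m ∈ N, g = c * y * m :=
  stmt1_general p hp N P hPp U hUN hUp' hUcomm hcent g hg hgcomm n hnN hgn
end

section
/- Let p be a prime, G a finite group, N a normal subgroup of G, P a p-subgroup of G, and P0 := P ∩ N. Let g be an element of G normalizing P, of order coprime to p, such that x⁻¹·g⁻¹xg ∈ P0 for all x ∈ P, and let n ∈ N satisfy g⁻¹xg = n⁻¹xn for all x ∈ P0. Then g·n⁻¹ centralizes P0, and for every x ∈ P the commutator x⁻¹·(gn⁻¹)⁻¹·x·(gn⁻¹) lies in N ∩ C_G(P0). -/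
/-!
Conjugation by `g` and by `n` agree on `P₀ = P ⊓ N`, so `c = g * n⁻¹` centralizes `P₀`. For `x ∈ P`
the commutator `x⁻¹ c⁻¹ x c` lies in `N` because `c ≡ g` modulo `N` and `[x, g] ∈ N`, and it lies in
`C_G(P₀)` because `x` normalizes `P₀`, hence normalizes its centralizer.
-/

namespace Subgroup

variable {G : Type*} [Group G]

theorem mul_inv_mem_centralizer_of_conj_eq {s : Set G} {g n : G}
    (h : ∀ x ∈ s, g⁻¹ * x * g = n⁻¹ * x * n) : g * n⁻¹ ∈ centralizer s := by
  refine mem_centralizer_iff.mpr fun x hx => ?_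
  have := congrArg (fun z => g * z * n⁻¹) (h x hx)
  simpa only [mul_assoc, mul_inv_cancel_left, mul_inv_cancel, mul_one] using this

theorem mem_normalizer_inf_of_mem {H N : Subgroup G} [N.Normal] {x : G} (hx : x ∈ H) :
    x ∈ normalizer ((H ⊓ N : Subgroup G) : Set G) :=
  inf_normalizer_le_normalizer_inf ⟨le_normalizer hx, normalizer_eq_top (H := N) ▸ mem_top x⟩

theorem commutator_mem_centralizer_of_mem_normalizer {s : Set G} {x c : G}
    (hx : x ∈ normalizer s) (hc : c ∈ centralizer s) :
    x⁻¹ * c⁻¹ * x * c ∈ centralizer s := by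
  have hconj : x⁻¹ * c⁻¹ * x⁻¹⁻¹ ∈ centralizer s :=
    (normal_subgroupOf_iff (centralizer_le_normalizer s)).mp inferInstance _ _
      (inv_mem hc) (inv_mem hx)
  rw [inv_inv] at hconj
  exact mul_mem hconj hc

theorem commutator_mul_inv_mem_of_commutator_mem {N : Subgroup G} [hN : N.Normal] {x g n : G}
    (hxg : x⁻¹ * (g⁻¹ * x * g) ∈ N) (hn : n ∈ N) :
    x⁻¹ * (g * n⁻¹)⁻¹ * x * (g * n⁻¹) ∈ N := by
  have hconj : x⁻¹ * n * x ∈ N := by simpa only [inv_inv] using hN.conj_mem n hn x⁻¹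
  have key : x⁻¹ * (g * n⁻¹)⁻¹ * x * (g * n⁻¹) = x⁻¹ * n * x * (x⁻¹ * (g⁻¹ * x * g)) * n⁻¹ := by
    group
  rw [key]
  exact mul_mem (mul_mem hconj hxg) (inv_mem hn)

end Subgroup

theorem stmt3_general {G : Type*} [Group G]
    (N : Subgroup G) [N.Normal] (P : Subgroup G)
    (g : G)
    (hgcomm : ∀ x ∈ P, x⁻¹ * (g⁻¹ * x * g) ∈ P ⊓ N)
    (n : G) (hnN : n ∈ N)
    (hgn : ∀ x ∈ P ⊓ N, g⁻¹ * x * g = n⁻¹ * x * n) :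
    g * n⁻¹ ∈ Subgroup.centralizer ↑(P ⊓ N) ∧
      ∀ x ∈ P, x⁻¹ * (g * n⁻¹)⁻¹ * x * (g * n⁻¹) ∈
        N ⊓ Subgroup.centralizer ↑(P ⊓ N) := by
  have hcent : g * n⁻¹ ∈ Subgroup.centralizer ↑(P ⊓ N) :=
    Subgroup.mul_inv_mem_centralizer_of_conj_eq hgn
  refine ⟨hcent, fun x hx => ⟨?_, ?_⟩⟩
  · exact Subgroup.commutator_mul_inv_mem_of_commutator_mem (hgcomm x hx).2 hnN
  · exact Subgroup.commutator_mem_centralizer_of_mem_normalizer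
      (Subgroup.mem_normalizer_inf_of_mem hx) hcent

theorem stmt3 (p : ℕ) (hp : p.Prime) {G : Type*} [Group G] [Finite G]
    (N : Subgroup G) [N.Normal] (P : Subgroup G) (hPp : IsPGroup p P)
    (g : G) (hgP : g ∈ Subgroup.normalizer (P : Set G)) (hg : Nat.Coprime (orderOf g) p)
    (hgcomm : ∀ x ∈ P, x⁻¹ * (g⁻¹ * x * g) ∈ P ⊓ N)
    (n : G) (hnN : n ∈ N)
    (hgn : ∀ x ∈ P ⊓ N, g⁻¹ * x * g = n⁻¹ * x * n) :
    g * n⁻¹ ∈ Subgroup.centralizer ↑(P ⊓ N) ∧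
      ∀ x ∈ P, x⁻¹ * (g * n⁻¹)⁻¹ * x * (g * n⁻¹) ∈
        N ⊓ Subgroup.centralizer ↑(P ⊓ N) :=
  stmt3_general N P g hgcomm n hnN hgn
end

section
/- Let S be a group, P a subgroup of S, Q a normal subgroup of P, γ an automorphism of P, and β : P → S an injective group homomorphism such that β(q) = γ(q) for all q ∈ Q. Then for every x ∈ P with γ(x) = x, the element x⁻¹·β(x) centralizes β(Q), i.e. x⁻¹·β(x) commutes with β(q) for every q ∈ Q. -/
theorem stmt6 {S : Type*} [Group S] (P Q : Subgroup S) (hQP : Q ≤ P)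
    (hQnorm : ∀ x ∈ P, ∀ q ∈ Q, x⁻¹ * q * x ∈ Q)
    (γ : MulAut ↥P) (β : ↥P →* S) (hβ : Function.Injective β)
    (hβγ : ∀ q : ↥P, (q : S) ∈ Q → β q = (γ q : S)) :
    ∀ x : ↥P, γ x = x →
      ∀ q : ↥P, (q : S) ∈ Q → Commute ((x : S)⁻¹ * β x) (β q) := by
  intro x hx q hq
  have hq' : ((x * q * x⁻¹ : ↥P) : S) ∈ Q := by
    have := hQnorm (x⁻¹ : ↥P) (x⁻¹ : ↥P).2 q hq
    simpa [mul_assoc] using this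
  have h1 : β (x * q * x⁻¹) = (γ (x * q * x⁻¹) : S) := hβγ _ hq'
  have h2 : (γ q : S) = β q := (hβγ q hq).symm
  have key : β x * β q * (β x)⁻¹ = (x : S) * β q * (x : S)⁻¹ := by
    simpa [map_mul, map_inv, hx, h2, mul_assoc] using h1
  show (x : S)⁻¹ * β x * β q = β q * ((x : S)⁻¹ * β x)
  have := key
  rw [mul_inv_eq_iff_eq_mul] at this
  rw [mul_assoc, this]
  group
end

section
/- Let F be a field and S an F-vector space which is the internal direct sum of three nonzero subspaces U, V, W. Let W′ be a subspace with V ⊓ W′ = ⊥ and V ⊔ W′ = V ⊔ W, with W′ ≠ W. Fix λ ∈ F with λ ≠ 0 and λ ≠ 1, and let β be the linear automorphism of S determined by β(y) = λ·y for y ∈ U ⊔ V and β(w′) = w′ for w′ ∈ W′. Set P := U ⊔ W. Then for every integer k, if β^k maps P into P, then β^k is the identity of S. -/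
theorem not_le_of_disjoint_of_sup_eq_sup {α : Type*} [Lattice α] [OrderBot α] [IsModularLattice α]
    {a b c : α} (hac : Disjoint a c) (hsup : a ⊔ c = a ⊔ b) (hne : c ≠ b) : ¬b ≤ c := fun hle =>
  hne (eq_of_le_of_inf_le_of_sup_le hle (by rw [inf_comm, hac.eq_bot]; exact bot_le)
    (by rw [sup_comm, hsup, sup_comm])).symm

namespace LinearEquiv

variable {K M : Type*} [DivisionRing K] [AddCommGroup M] [Module K M]

lemma symm_apply_eq_inv_smul_of_forall_mem {β : M ≃ₗ[K] M} {A : Submodule K M} {c : K}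
    (hc : c ≠ 0) (hβ : ∀ x ∈ A, β x = c • x) {x : M} (hx : x ∈ A) : β.symm x = c⁻¹ • x := by
  rw [symm_apply_eq, hβ _ (A.smul_mem _ hx), smul_inv_smul₀ hc]

lemma zpow_apply_eq_smul_of_forall_mem {β : M ≃ₗ[K] M} {A : Submodule K M} {c : K}
    (hc : c ≠ 0) (hβ : ∀ x ∈ A, β x = c • x) (k : ℤ) {x : M} (hx : x ∈ A) :
    (β ^ k) x = c ^ k • x := by
  induction k using Int.induction_on with
  | zero => simp
  | succ n ih =>
    rw [zpow_add_one, mul_apply, hβ x hx, map_smul, ih, smul_smul, ← zpow_one_add₀ hc, add_comm]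
  | pred n ih =>
    rw [zpow_sub_one, mul_apply, coe_inv, symm_apply_eq_inv_smul_of_forall_mem hc hβ hx,
      map_smul, ih, smul_smul, ← zpow_neg_one, ← zpow_add₀ hc, add_comm, sub_eq_add_neg]

end LinearEquiv

theorem stmt11_general {F : Type*} [Field F] {S : Type*} [AddCommGroup S] [Module F S]
    (U V W : Submodule F S)
    (htop : U ⊔ V ⊔ W = ⊤) (hUdisj : U ⊓ (V ⊔ W) = ⊥) (hVW : V ⊓ W = ⊥)
    (W' : Submodule F S) (hW'i : V ⊓ W' = ⊥) (hW's : V ⊔ W' = V ⊔ W) (hW'ne : W' ≠ W)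
    (lam : F) (hlam0 : lam ≠ 0)
    (β : S ≃ₗ[F] S)
    (hβUV : ∀ y ∈ U ⊔ V, β y = lam • y) (hβW' : ∀ w ∈ W', β w = w) :
    ∀ k : ℤ, (∀ x ∈ U ⊔ W, (β ^ k) x ∈ U ⊔ W) → β ^ k = 1 := by
  intro k hk
  have hUV (x : S) (hx : x ∈ U ⊔ V) : (β ^ k) x = lam ^ k • x :=
    β.zpow_apply_eq_smul_of_forall_mem hlam0 hβUV k hx
  have hW'fix (x : S) (hx : x ∈ W') : (β ^ k) x = x := by
    simpa using β.zpow_apply_eq_smul_of_forall_mem one_ne_zero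
      (fun y hy => (hβW' y hy).trans (one_smul F y).symm) k hx
  obtain ⟨w, hwW, hwW'⟩ : ∃ w ∈ W, w ∉ W' := SetLike.not_le_iff_exists.mp
    (not_le_of_disjoint_of_sup_eq_sup (disjoint_iff.mpr hW'i) hW's hW'ne)
  have hwP : w ∈ U ⊔ W := Submodule.mem_sup_right hwW
  obtain ⟨v, hv, w', hw', rfl⟩ := Submodule.mem_sup.mp (hW's ▸ Submodule.mem_sup_right hwW)
  have hv0 : v ≠ 0 := by
    rintro rfl
    exact hwW' (by simpa using hw')
  -- `β ^ k` moves `v + w' ∈ U ⊔ W` by `(lam ^ k - 1) • v ∈ V`, and `V` meets `U ⊔ W` trivially.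
  have hlamk : lam ^ k = 1 := by
    have hdisj : Disjoint V (U ⊔ W) := sup_comm W U ▸
      (disjoint_iff.mpr hVW).disjoint_sup_right_of_disjoint_sup_left (disjoint_iff.mpr hUdisj).symm
    have hmove : (β ^ k) (v + w') - (v + w') = (lam ^ k - 1) • v := by
      rw [map_add, hUV v (Submodule.mem_sup_right hv), hW'fix w' hw', sub_smul, one_smul]
      abel
    have hzero : (lam ^ k - 1) • v = 0 :=
      Submodule.disjoint_def.mp hdisj _ (V.smul_mem _ hv) (hmove ▸ sub_mem (hk _ hwP) hwP)
    exact sub_eq_zero.mp ((smul_eq_zero.mp hzero).resolve_right hv0)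
  refine LinearMap.ext_on_codisjoint (f := β ^ k) (g := 1) (S := U ⊔ V) (T := W')
    (codisjoint_iff.mpr (by rw [sup_assoc, hW's, ← sup_assoc, htop])) (fun x hx => ?_) hW'fix
  simp [hUV x hx, hlamk]

theorem stmt11 {F : Type*} [Field F] {S : Type*} [AddCommGroup S] [Module F S]
    (U V W : Submodule F S) (hU : U ≠ ⊥) (hV : V ≠ ⊥) (hW : W ≠ ⊥)
    (htop : U ⊔ V ⊔ W = ⊤) (hUdisj : U ⊓ (V ⊔ W) = ⊥) (hVW : V ⊓ W = ⊥)
    (W' : Submodule F S) (hW'i : V ⊓ W' = ⊥) (hW's : V ⊔ W' = V ⊔ W) (hW'ne : W' ≠ W)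
    (lam : F) (hlam0 : lam ≠ 0) (hlam1 : lam ≠ 1)
    (β : S ≃ₗ[F] S)
    (hβUV : ∀ y ∈ U ⊔ V, β y = lam • y) (hβW' : ∀ w ∈ W', β w = w) :
    ∀ k : ℤ, (∀ x ∈ U ⊔ W, (β ^ k) x ∈ U ⊔ W) → β ^ k = 1 :=
  stmt11_general U V W htop hUdisj hVW W' hW'i hW's hW'ne lam hlam0 β hβUV hβW'
end
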